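/- arXiv:1701.03994 — 4 statements merged into one kernel-verified Lean document; each statement's English description precedes it below -/
import Mathlib

section
/- The base case of the block determinant lemma: for complex m×m matrices M_1, M_2, M_3, N_1, N_2, the determinant of the 3×3 block matrix [[M_1, M_2, M_3], [-I, N_1, 0], [0, -I, N_2]] equals det(M_1 N_1 N_2 + M_2 N_2 + M_3). -/
open Matrix

section Aux

variable {n : Type*} [Fintype n] [DecidableEq n] {R : Type*} [CommRing R]

/-- A 3×3 block matrix built from nine square blocks. -/
def blk (A B C D E F G H I : Matrix n n R) : Matrix (n ⊕ (n ⊕ n)) (n ⊕ (n ⊕ n)) R :=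
  fromBlocks A (of fun i => Sum.elim (B i) (C i))
    (of fun p j => Sum.elim (fun i => D i j) (fun i => G i j) p)
    (fromBlocks E F H I)

lemma blk_mul (A B C D E F G H I A' B' C' D' E' F' G' H' I' : Matrix n n R) :
    blk A B C D E F G H I * blk A' B' C' D' E' F' G' H' I' =
    blk (A*A'+B*D'+C*G') (A*B'+B*E'+C*H') (A*C'+B*F'+C*I')
        (D*A'+E*D'+F*G') (D*B'+E*E'+F*H') (D*C'+E*F'+F*I')
        (G*A'+H*D'+I*G') (G*B'+H*E'+I*H') (G*C'+H*F'+I*I') := by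
  ext p q
  rcases p with i | i | i <;> rcases q with j | j | j <;>
    simp [blk, Matrix.mul_apply, Fintype.sum_sum_type, Finset.sum_add_distrib, add_assoc]

lemma zero_rect_col :
    (of fun p j => Sum.elim (fun i => (0 : Matrix n n R) i j)
      (fun i => (0 : Matrix n n R) i j) p) = (0 : Matrix (n ⊕ n) n R) := by
  ext p j; rcases p with p | p <;> simp

lemma zero_rect_row :
    (of fun i => Sum.elim ((0 : Matrix n n R) i) ((0 : Matrix n n R) i))
      = (0 : Matrix n (n ⊕ n) R) := by
  ext i q; rcases q with q | q <;> simp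

lemma det_blk_upper (A B C E F I : Matrix n n R) :
    (blk A B C 0 E F 0 0 I).det = A.det * (E.det * I.det) := by
  unfold blk
  rw [zero_rect_col, det_fromBlocks_zero₂₁ A _ (fromBlocks E F 0 I),
    det_fromBlocks_zero₂₁ E F I]

lemma det_blk_lower (A D E G H I : Matrix n n R) :
    (blk A 0 0 D E 0 G H I).det = A.det * (E.det * I.det) := by
  unfold blk
  rw [zero_rect_row, det_fromBlocks_zero₁₂ A _ (fromBlocks E 0 H I),
    det_fromBlocks_zero₁₂ E H I]

lemma det_J : (fromBlocks (0 : Matrix n n R) (-1 : Matrix n n R) (1 : Matrix n n R) (0 : Matrix n n R)).det = 1 := by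
  have h : (fromBlocks (0 : Matrix n n R) (-1 : Matrix n n R) (1 : Matrix n n R) (0 : Matrix n n R)) =
      fromBlocks 1 (-1) 0 1 * (fromBlocks 1 0 1 1 * fromBlocks 1 (-1) 0 1) := by
    rw [fromBlocks_multiply, fromBlocks_multiply]
    simp only [one_mul, mul_one, zero_mul, mul_zero, add_zero, zero_add, neg_mul, mul_neg,
      neg_neg, neg_zero, neg_add_cancel, add_neg_cancel]
  rw [h, det_mul, det_mul, det_fromBlocks_zero₂₁, det_fromBlocks_zero₁₂]
  simp

lemma det_Jb : (blk (1 : Matrix n n R) 0 0 0 0 (-1) 0 1 0).det = 1 := by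
  unfold blk
  rw [zero_rect_col, det_fromBlocks_zero₂₁ 1 _ (fromBlocks (0 : Matrix n n R) (-1 : Matrix n n R) (1 : Matrix n n R) (0 : Matrix n n R)), det_J]
  simp

end Aux

/-- Base case: `det [[M₁, M₂, M₃], [-I, N₁, 0], [0, -I, N₂]] = det (M₁N₁N₂ + M₂N₂ + M₃)`. -/
theorem block_det_base (m : ℕ) (M₁ M₂ M₃ N₁ N₂ : Matrix (Fin m) (Fin m) ℂ) :
    (Matrix.of (fun (p q : Fin 3 × Fin m) =>
      if p.1 = 0 then
        (if q.1 = 0 then M₁ else if q.1 = 1 then M₂ else M₃) p.2 q.2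
      else if p.1 = 1 then
        (if q.1 = 0 then -(1 : Matrix (Fin m) (Fin m) ℂ) else if q.1 = 1 then N₁ else 0) p.2 q.2
      else
        (if q.1 = 0 then 0 else if q.1 = 1 then -(1 : Matrix (Fin m) (Fin m) ℂ) else N₂) p.2 q.2)).det
    = (M₁ * N₁ * N₂ + M₂ * N₂ + M₃).det := by
  let e : (Fin m ⊕ (Fin m ⊕ Fin m)) ≃ Fin 3 × Fin m :=
    { toFun := Sum.elim (fun i => (0, i)) (Sum.elim (fun i => (1, i)) (fun i => (2, i)))
      invFun := fun q => if q.1 = 0 then Sum.inl q.2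
        else if q.1 = 1 then Sum.inr (Sum.inl q.2) else Sum.inr (Sum.inr q.2)
      left_inv := by rintro (i | i | i) <;> simp
      right_inv := by
        rintro ⟨q, i⟩
        fin_cases q <;> simp }
  have hsub :
      ((Matrix.of (fun (p q : Fin 3 × Fin m) =>
      if p.1 = 0 then
        (if q.1 = 0 then M₁ else if q.1 = 1 then M₂ else M₃) p.2 q.2
      else if p.1 = 1 then
        (if q.1 = 0 then -(1 : Matrix (Fin m) (Fin m) ℂ) else if q.1 = 1 then N₁ else 0) p.2 q.2
      else
        (if q.1 = 0 then 0 else if q.1 = 1 then -(1 : Matrix (Fin m) (Fin m) ℂ) else N₂) p.2 q.2)).submatrix e e)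
      = blk M₁ M₂ M₃ (-1) N₁ 0 0 (-1) N₂ := by
    ext p q
    rcases p with i | i | i <;> rcases q with j | j | j <;>
      simp [blk, e, Matrix.submatrix_apply]
  have hAV : blk M₁ M₂ M₃ (-1) N₁ 0 0 (-1) N₂ * blk (N₁*N₂) (-1) 0 N₂ 0 (-1) 1 0 0 =
      blk (M₁*N₁*N₂ + M₂*N₂ + M₃) (-M₁) (-M₂) 0 1 (-N₁) 0 0 1 := by
    rw [blk_mul]
    simp only [mul_one, one_mul, mul_zero, zero_mul, add_zero, zero_add, mul_neg, neg_mul,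
      neg_neg, neg_zero, neg_add_cancel, add_neg_cancel, mul_assoc]
  have hVT : blk (N₁*N₂) (-1) 0 N₂ 0 (-1) 1 0 0 * blk (1 : Matrix (Fin m) (Fin m) ℂ) 0 0 (N₁*N₂) 1 0 N₂ 0 1 =
      blk 0 (-1) 0 0 0 (-1) 1 0 0 := by
    rw [blk_mul]
    simp only [mul_one, one_mul, mul_zero, zero_mul, add_zero, zero_add, mul_neg, neg_mul,
      neg_neg, neg_zero, neg_add_cancel, add_neg_cancel, mul_assoc]
  have hfact : (blk (0 : Matrix (Fin m) (Fin m) ℂ) (-1) 0 0 0 (-1) 1 0 0) =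
      blk (1 : Matrix (Fin m) (Fin m) ℂ) 0 0 0 0 (-1) 0 1 0 *
        (blk (1 : Matrix (Fin m) (Fin m) ℂ) (-1) 0 0 1 0 0 0 1 *
          (blk (1 : Matrix (Fin m) (Fin m) ℂ) 0 0 1 1 0 0 0 1 *
            blk (1 : Matrix (Fin m) (Fin m) ℂ) (-1) 0 0 1 0 0 0 1)) := by
    rw [blk_mul, blk_mul, blk_mul]
    simp only [mul_one, one_mul, mul_zero, zero_mul, add_zero, zero_add, mul_neg, neg_mul,
      neg_neg, neg_zero, neg_add_cancel, add_neg_cancel, mul_assoc]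
  have hdetQ : (blk (0 : Matrix (Fin m) (Fin m) ℂ) (-1) 0 0 0 (-1) 1 0 0).det = 1 := by
    rw [hfact, det_mul, det_mul, det_mul, det_Jb, det_blk_upper, det_blk_lower]
    simp
  have hdetTl : (blk (1 : Matrix (Fin m) (Fin m) ℂ) 0 0 (N₁*N₂) 1 0 N₂ 0 1).det = 1 := by
    rw [det_blk_lower]; simp
  have hdetV : (blk (N₁*N₂) (-1) 0 N₂ 0 (-1) 1 0 0).det = 1 := by
    have := congrArg Matrix.det hVT
    rw [det_mul, hdetTl, mul_one, hdetQ] at this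
    exact this
  have hdetA : (blk M₁ M₂ M₃ (-1) N₁ 0 0 (-1) N₂).det = (M₁ * N₁ * N₂ + M₂ * N₂ + M₃).det := by
    have := congrArg Matrix.det hAV
    rw [det_mul, hdetV, mul_one, det_blk_upper] at this
    simpa using this
  rw [← Matrix.det_submatrix_equiv_self e, hsub, hdetA]
end

section
/- Let P(z) = Σ_{j=0}^n A_j z^j with A_j ∈ ℂ^{m×m}, let k divide n, q = n/k, and define the km×km block matrices: C_q = diag(A_n, I, ..., I); C_0 has top block row (A_{(k-1)q}, A_{(k-2)q}, ..., A_q, A_0), blocks -I on the block subdiagonal, and zeros elsewhere; and for j = 1,...,q-1, C_j has top block row (A_{j+(k-1)q}, A_{j+(k-2)q}, ..., A_{j+q}, A_j) and zeros elsewhere. Then det(P(z)) = det(Σ_{j=0}^q C_j z^j) for all z ∈ ℂ. -/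
open Matrix Finset

/-- Flatten a `k × k` matrix of `m × m` matrices into a `km × km` matrix. -/
def flatEll (m k : ℕ) (B : Matrix (Fin k) (Fin k) (Matrix (Fin m) (Fin m) ℂ)) :
    Matrix (Fin k × Fin m) (Fin k × Fin m) ℂ :=
  Matrix.of fun p r => B p.1 r.1 p.2 r.2

lemma flatEll_mul (m k : ℕ) (B C : Matrix (Fin k) (Fin k) (Matrix (Fin m) (Fin m) ℂ)) :
    flatEll m k (B * C) = flatEll m k B * flatEll m k C := by
  ext ⟨p, i⟩ ⟨c, j⟩
  simp only [flatEll, Matrix.mul_apply, Matrix.of_apply, Fintype.sum_prod_type]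
  rw [Matrix.sum_apply]
  exact Finset.sum_congr rfl fun s _ => Matrix.mul_apply


lemma flatEll_det_one (m k : ℕ) (B : Matrix (Fin k) (Fin k) (Matrix (Fin m) (Fin m) ℂ))
    (htri : ∀ p c : Fin k, c < p → B p c = 0) (hdiag : ∀ p, B p p = 1) :
    (flatEll m k B).det = 1 := by
  have hbt : (flatEll m k B).BlockTriangular (fun x => x.1) := by
    intro p c h
    show B p.1 c.1 p.2 c.2 = 0
    rw [htri _ _ h]
    rfl
  rw [hbt.det]
  apply Finset.prod_eq_one
  intro a _
  have : (flatEll m k B).toSquareBlock (fun x => x.1) a = 1 := by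
    ext x y
    have hx : x.1.1 = a := x.2
    have hy : y.1.1 = a := y.2
    simp only [Matrix.toSquareBlock_def, flatEll, Matrix.of_apply]
    have hxy : x.1.1 = y.1.1 := hx.trans hy.symm
    rw [hxy, hdiag]
    by_cases h : x = y
    · subst h; simp [Matrix.one_apply]
    · have h2 : x.1.2 ≠ y.1.2 := by
        intro h3
        exact h (Subtype.ext (Prod.ext hxy h3))
      rw [Matrix.one_apply_ne h2, Matrix.one_apply_ne (by simpa [Subtype.ext_iff] using h)]
  rw [this, Matrix.det_one]

lemma sum_grid {M : Type*} [AddCommMonoid M] (q : ℕ) (g : ℕ → M) :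
    ∀ K : ℕ, ∑ i ∈ Finset.range (K * q), g i
      = ∑ s ∈ Finset.range K, ∑ j ∈ Finset.range q, g (j + s * q) := by
  intro K
  induction K with
  | zero => simp
  | succ K ih =>
      rw [Finset.sum_range_succ, ← ih, Nat.succ_mul, Finset.sum_range_add]
      congr 1
      exact Finset.sum_congr rfl fun j _ => by rw [Nat.add_comm]

namespace LLif

noncomputable section

variable (m k q n : ℕ) (A : ℕ → Matrix (Fin m) (Fin m) ℂ) (z : ℂ)

/-- The top block row entries (with the leading coefficient folded into `T 0`). -/
def T (r : ℕ) : Matrix (Fin m) (Fin m) ℂ :=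
  (∑ j ∈ Finset.range q, z ^ j • A (j + (k - 1 - r) * q)) + (if r = 0 then z ^ q • A n else 0)

/-- Horner partial sums. -/
def S (c : ℕ) : Matrix (Fin m) (Fin m) ℂ :=
  ∑ r ∈ Finset.range (c + 1), (z ^ q) ^ (c - r) • T m k q n A z r

def MM : Matrix (Fin k) (Fin k) (Matrix (Fin m) (Fin m) ℂ) :=
  Matrix.of fun p r =>
    if (p : ℕ) = 0 then T m k q n A z (r : ℕ)
    else if (r : ℕ) + 1 = (p : ℕ) then -1
    else if r = p then (z ^ q) • (1 : Matrix (Fin m) (Fin m) ℂ) else 0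

def VV : Matrix (Fin k) (Fin k) (Matrix (Fin m) (Fin m) ℂ) :=
  Matrix.of fun p c =>
    if (p : ℕ) ≤ (c : ℕ) then (z ^ q) ^ ((c : ℕ) - (p : ℕ)) • (1 : Matrix (Fin m) (Fin m) ℂ) else 0

def NN : Matrix (Fin k) (Fin k) (Matrix (Fin m) (Fin m) ℂ) :=
  Matrix.of fun p c =>
    if (p : ℕ) = 0 then S m k q n A z (c : ℕ)
    else if (c : ℕ) + 1 = (p : ℕ) then -1 else 0

def UU : Matrix (Fin k) (Fin k) (Matrix (Fin m) (Fin m) ℂ) :=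
  Matrix.of fun p s =>
    if p = s then 1
    else if (p : ℕ) = 0 ∧ 1 ≤ (s : ℕ) then S m k q n A z ((s : ℕ) - 1) else 0

def WW : Matrix (Fin k) (Fin k) (Matrix (Fin m) (Fin m) ℂ) :=
  Matrix.of fun p c =>
    if (p : ℕ) = 0 then (if (c : ℕ) = k - 1 then S m k q n A z (k - 1) else 0)
    else if (c : ℕ) + 1 = (p : ℕ) then -1 else 0

lemma fin_sum_trunc {M : Type*} [AddCommMonoid M] {k : ℕ} (c : ℕ) (hc : c < k) (g : ℕ → M) :
    (∑ s : Fin k, if (s : ℕ) ≤ c then g (s : ℕ) else 0) = ∑ r ∈ Finset.range (c + 1), g r := by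
  rw [Fin.sum_univ_eq_sum_range (fun r => if r ≤ c then g r else 0) k]
  rw [← Finset.sum_subset (Finset.range_subset_range.2 (by omega : c + 1 ≤ k))
    (fun x _ hx => by rw [if_neg (by simp only [Finset.mem_range] at hx ⊢; omega)])]
  exact Finset.sum_congr rfl fun r hr => if_pos (by simp only [Finset.mem_range] at hr; omega)

lemma MV_eq : MM m k q n A z * VV m k q z = NN m k q n A z := by
  apply Matrix.ext
  intro p c
  rw [Matrix.mul_apply]
  by_cases hp : (p : ℕ) = 0
  · simp only [MM, NN, VV, Matrix.of_apply, hp, if_pos, if_true]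
    have hsummand : ∀ s : Fin k,
        T m k q n A z (s : ℕ) * (if (s : ℕ) ≤ (c : ℕ) then (z ^ q) ^ ((c : ℕ) - (s : ℕ)) • (1 : Matrix (Fin m) (Fin m) ℂ) else 0)
          = if (s : ℕ) ≤ (c : ℕ) then (z ^ q) ^ ((c : ℕ) - (s : ℕ)) • T m k q n A z (s : ℕ) else 0 := by
      intro s
      split_ifs
      · rw [mul_smul_comm, mul_one]
      · rw [mul_zero]
    simp_rw [hsummand]
    exact fin_sum_trunc (c : ℕ) c.2 (fun r => (z ^ q) ^ ((c : ℕ) - r) • T m k q n A z r)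
  · have hp1 : 1 ≤ (p : ℕ) := by omega
    have hpk : (p : ℕ) - 1 < k := by omega
    have hM : ∀ s : Fin k, MM m k q n A z p s
        = (if s = (⟨(p : ℕ) - 1, hpk⟩ : Fin k) then -1 else 0)
          + (if s = p then (z ^ q) • (1 : Matrix (Fin m) (Fin m) ℂ) else 0) := by
      intro s
      simp only [MM, Matrix.of_apply, hp, if_false]
      by_cases h1 : (s : ℕ) + 1 = (p : ℕ)
      · have e1 : s = (⟨(p : ℕ) - 1, hpk⟩ : Fin k) := Fin.ext (by show (s : ℕ) = (p : ℕ) - 1; omega)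
        have e2 : ¬ s = p := fun hh => by rw [hh] at h1; omega
        rw [if_pos h1, if_pos e1, if_neg e2, add_zero]
      · have e1 : ¬ s = (⟨(p : ℕ) - 1, hpk⟩ : Fin k) := fun hh => by
          have := congrArg Fin.val hh
          simp only [] at this
          omega
        rw [if_neg h1, if_neg e1]
        by_cases h2 : s = p
        · rw [if_pos h2, zero_add]
        · rw [if_neg h2, add_zero]
    simp_rw [hM, add_mul, Finset.sum_add_distrib, ite_mul, zero_mul,
      Finset.sum_ite_eq' Finset.univ, Finset.mem_univ, if_true]
    simp only [NN, VV, Matrix.of_apply, hp, if_false]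
    by_cases hc1 : (c : ℕ) + 1 = (p : ℕ)
    · rw [if_pos hc1, if_pos (by show (p : ℕ) - 1 ≤ (c : ℕ); omega),
        if_neg (by omega : ¬ (p : ℕ) ≤ (c : ℕ)),
        (by omega : (c : ℕ) - ((p : ℕ) - 1) = 0)]
      simp
    · rw [if_neg hc1]
      by_cases hcp : (p : ℕ) ≤ (c : ℕ)
      · rw [if_pos (by show (p : ℕ) - 1 ≤ (c : ℕ); omega), if_pos hcp,
          (by omega : (c : ℕ) - ((p : ℕ) - 1) = ((c : ℕ) - (p : ℕ)) + 1),
          pow_succ, neg_one_mul, smul_mul_smul_comm, one_mul,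
          mul_comm (z ^ q) ((z ^ q) ^ ((c : ℕ) - (p : ℕ)))]
        exact neg_add_cancel _
      · rw [if_neg (by omega : ¬ (p : ℕ) - 1 ≤ (c : ℕ)), if_neg hcp,
          neg_one_mul, neg_zero, mul_zero, add_zero]

lemma UN_eq : UU m k q n A z * NN m k q n A z = WW m k q n A z := by
  apply Matrix.ext
  intro p c
  rw [Matrix.mul_apply]
  by_cases hp : (p : ℕ) = 0
  · have hU : ∀ s : Fin k, UU m k q n A z p s
        = (if s = p then (1 : Matrix (Fin m) (Fin m) ℂ) else 0)
          + (if 1 ≤ (s : ℕ) then S m k q n A z ((s : ℕ) - 1) else 0) := by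
      intro s
      simp only [UU, Matrix.of_apply]
      by_cases h2 : p = s
      · rw [if_pos h2, if_pos h2.symm, if_neg (by rw [← h2]; omega), add_zero]
      · have hs1 : 1 ≤ (s : ℕ) := by
          rcases Nat.eq_zero_or_pos (s : ℕ) with h0 | h1
          · exact absurd (Fin.ext (by omega : (p : ℕ) = (s : ℕ))) h2
          · exact h1
        rw [if_neg h2, if_pos ⟨hp, hs1⟩, if_neg (fun hh => h2 hh.symm), if_pos hs1, zero_add]
    simp_rw [hU, add_mul, Finset.sum_add_distrib, ite_mul, zero_mul, one_mul,
      Finset.sum_ite_eq' Finset.univ, Finset.mem_univ, if_true]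
    by_cases hck : (c : ℕ) + 1 < k
    · have hsum2 : ∀ s : Fin k,
          (if 1 ≤ (s : ℕ) then S m k q n A z ((s : ℕ) - 1) * NN m k q n A z s c else 0)
            = (if s = (⟨(c : ℕ) + 1, hck⟩ : Fin k) then -(S m k q n A z (c : ℕ)) else 0) := by
        intro s
        by_cases h1 : 1 ≤ (s : ℕ)
        · rw [if_pos h1]
          simp only [NN, Matrix.of_apply, if_neg (by omega : ¬ (s : ℕ) = 0)]
          by_cases h3 : (c : ℕ) + 1 = (s : ℕ)
          · rw [if_pos h3, if_pos (Fin.ext (by show (s : ℕ) = (c : ℕ) + 1; omega)),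
              (by omega : (s : ℕ) - 1 = (c : ℕ)), mul_neg_one]
          · rw [if_neg h3, mul_zero,
              if_neg (fun hh => h3 (by have := congrArg Fin.val hh; simp only [] at this; omega))]
        · rw [if_neg h1,
            if_neg (fun hh => h1 (by have := congrArg Fin.val hh; simp only [] at this; omega))]
      simp_rw [hsum2, Finset.sum_ite_eq' Finset.univ, Finset.mem_univ, if_true]
      simp only [NN, WW, Matrix.of_apply, hp, if_true, reduceIte,
        if_neg (by omega : ¬ (c : ℕ) = k - 1)]
      exact add_neg_cancel _
    · have hsum2 : ∀ s : Fin k,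
          (if 1 ≤ (s : ℕ) then S m k q n A z ((s : ℕ) - 1) * NN m k q n A z s c else 0) = 0 := by
        intro s
        by_cases h1 : 1 ≤ (s : ℕ)
        · rw [if_pos h1]
          simp only [NN, Matrix.of_apply, if_neg (by omega : ¬ (s : ℕ) = 0)]
          rw [if_neg (by have := s.2; omega : ¬ (c : ℕ) + 1 = (s : ℕ)), mul_zero]
        · rw [if_neg h1]
      rw [Finset.sum_eq_zero (fun s _ => hsum2 s), add_zero]
      simp only [NN, WW, Matrix.of_apply, hp, if_true, reduceIte]
      rw [if_pos (by have := c.2; omega : (c : ℕ) = k - 1),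
        (by have := c.2; omega : k - 1 = (c : ℕ))]
  · have hU : ∀ s : Fin k, UU m k q n A z p s
        = (if p = s then (1 : Matrix (Fin m) (Fin m) ℂ) else 0) := by
      intro s
      simp only [UU, Matrix.of_apply]
      by_cases h2 : p = s
      · rw [if_pos h2, if_pos h2]
      · rw [if_neg h2, if_neg h2, if_neg (by simp [hp])]
    simp_rw [hU, ite_mul, zero_mul, one_mul, Finset.sum_ite_eq Finset.univ,
      Finset.mem_univ, if_true]
    simp only [NN, WW, Matrix.of_apply, hp, if_false]

lemma det_flat_V (hk : 0 < k) : (flatEll m k (VV m k q z)).det = 1 := by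
  apply flatEll_det_one
  · intro p c h
    have h2 : (c : ℕ) < (p : ℕ) := h
    simp only [VV, Matrix.of_apply]
    rw [if_neg (by omega)]
  · intro p
    simp [VV]

lemma det_flat_U (hk : 0 < k) : (flatEll m k (UU m k q n A z)).det = 1 := by
  apply flatEll_det_one
  · intro p c h
    have h2 : (c : ℕ) < (p : ℕ) := h
    simp only [UU, Matrix.of_apply]
    rw [if_neg (by intro hh; rw [hh] at h2; omega), if_neg (by rintro ⟨h3, h4⟩; omega)]
  · intro p
    simp [UU]

lemma det_flat_W (K : ℕ) :
    (flatEll m (K + 1) (WW m (K + 1) q n A z)).det = (S m (K + 1) q n A z K).det := by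
  classical
  set D : Fin (K + 1) → Matrix (Fin m) (Fin m) ℂ :=
    fun a => if (a : ℕ) = 0 then S m (K + 1) q n A z K else -1 with hD
  set g : Equiv.Perm (Fin (K + 1) × Fin m) :=
    Equiv.prodCongrLeft (fun _ : Fin m => finRotate (K + 1)) with hg
  have hW : flatEll m (K + 1) (WW m (K + 1) q n A z)
      = ((Matrix.blockDiagonal D).submatrix (Equiv.prodComm (Fin (K + 1)) (Fin m))
          (Equiv.prodComm (Fin (K + 1)) (Fin m))).submatrix id g := by
    ext ⟨p, i⟩ ⟨c, j⟩
    simp only [flatEll, WW, Matrix.of_apply, Matrix.submatrix_apply, id_eq, hg,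
      Equiv.prodCongrLeft_apply, Equiv.prodComm_apply, Prod.swap_prod_mk,
      Matrix.blockDiagonal_apply, finRotate_succ_apply, hD]
    have hval : ((c + 1 : Fin (K + 1)) : ℕ) = if (c : ℕ) = K then 0 else (c : ℕ) + 1 := by
      rw [Fin.val_add_one]
      by_cases hc : c = Fin.last K
      · rw [if_pos hc, if_pos (by rw [hc]; rfl)]
      · rw [if_neg hc, if_neg (fun h => hc (Fin.ext (by simp [Fin.last]; exact h)))]
    by_cases hp : (p : ℕ) = 0
    · rw [if_pos hp]
      by_cases hc : (c : ℕ) = K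
      · rw [if_pos (by omega : (c : ℕ) = K + 1 - 1),
          if_pos (Fin.ext (by rw [hval, if_pos hc, hp])), if_pos hp]
        norm_num
      · rw [if_neg (by omega : ¬ (c : ℕ) = K + 1 - 1),
          if_neg (fun h => by have := congrArg Fin.val h; rw [hval, if_neg hc] at this; omega)]
        simp
    · rw [if_neg hp]
      by_cases hc2 : (c : ℕ) + 1 = (p : ℕ)
      · have hcK : ¬ (c : ℕ) = K := by have := p.2; omega
        rw [if_pos hc2, if_pos (Fin.ext (by rw [hval, if_neg hcK]; omega)), if_neg hp]
      · rw [if_neg hc2, if_neg (fun h => by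
          have := congrArg Fin.val h
          rw [hval] at this
          by_cases hc : (c : ℕ) = K
          · rw [if_pos hc] at this; omega
          · rw [if_neg hc] at this; omega)]
        simp
  rw [hW, Matrix.det_permute', Matrix.det_submatrix_equiv_self, Matrix.det_blockDiagonal]
  have hsign : Equiv.Perm.sign g = ((-1 : ℤˣ) ^ K) ^ m := by
    rw [hg, Equiv.Perm.sign_prodCongrLeft]
    simp [sign_finRotate]
  have hprod : (∏ a : Fin (K + 1), (D a).det)
      = (S m (K + 1) q n A z K).det * ((-1 : ℂ) ^ m) ^ K := by
    rw [Fin.prod_univ_succ]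
    have h0 : D 0 = S m (K + 1) q n A z K := by simp [hD]
    have hsucc : ∀ i : Fin K, (D i.succ).det = (-1 : ℂ) ^ m := by
      intro i
      have : D i.succ = -1 := by
        rw [hD]
        exact if_neg (by simp [Fin.val_succ])
      rw [this, show (-1 : Matrix (Fin m) (Fin m) ℂ) = -(1 : Matrix (Fin m) (Fin m) ℂ) from rfl,
        Matrix.det_neg, Matrix.det_one, Fintype.card_fin, mul_one]
    rw [h0, Finset.prod_congr rfl (fun i _ => hsucc i), Finset.prod_const, Finset.card_univ,
      Fintype.card_fin]
  rw [hsign, hprod]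
  push_cast
  rw [← mul_assoc, mul_comm (((-1 : ℂ) ^ K) ^ m), mul_assoc]
  rw [← pow_mul, ← pow_mul, mul_comm m K, ← pow_add, ← two_mul]
  rw [pow_mul, neg_one_sq, one_pow, mul_one]

lemma S_eq (hk : 0 < k) :
    S m k q (k * q) A z (k - 1) = ∑ j ∈ Finset.range (k * q + 1), z ^ j • A j := by
  unfold S T
  rw [(by omega : k - 1 + 1 = k)]
  simp_rw [smul_add, Finset.sum_add_distrib]
  have h1 : (∑ r ∈ Finset.range k,
      (z ^ q) ^ (k - 1 - r) • ∑ j ∈ Finset.range q, z ^ j • A (j + (k - 1 - r) * q))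
      = ∑ i ∈ Finset.range (k * q), z ^ i • A i := by
    rw [Finset.sum_range_reflect
      (fun s => (z ^ q) ^ s • ∑ j ∈ Finset.range q, z ^ j • A (j + s * q)) k]
    rw [sum_grid q (fun i => z ^ i • A i) k]
    refine Finset.sum_congr rfl fun s _ => ?_
    rw [Finset.smul_sum]
    refine Finset.sum_congr rfl fun j _ => ?_
    rw [smul_smul, ← pow_mul, ← pow_add, (by ring : q * s + j = j + s * q)]
  have h2 : (∑ r ∈ Finset.range k,
      (z ^ q) ^ (k - 1 - r) • (if r = 0 then z ^ q • A (k * q) else 0))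
      = z ^ (k * q) • A (k * q) := by
    have hs : ∀ r, (z ^ q) ^ (k - 1 - r) • (if r = 0 then z ^ q • A (k * q) else 0)
        = if r = 0 then z ^ (k * q) • A (k * q) else 0 := by
      intro r
      split_ifs with h
      · subst h
        rw [Nat.sub_zero, smul_smul, ← pow_succ, (by omega : k - 1 + 1 = k), ← pow_mul,
          mul_comm q k]
      · rw [smul_zero]
    simp_rw [hs]
    rw [Finset.sum_ite_eq' (Finset.range k) 0, if_pos (Finset.mem_range.2 hk)]
  rw [h1, h2, Finset.sum_range_succ]

end

end LLif

/-- ℓ-ification: with `n = k * q` and the block coefficients `C_j` defined as in the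
ℓ-ification construction (`C_q = diag(A_n, I, …, I)`, `C_0` with top block row
`(A_{(k-1)q}, …, A_q, A_0)` and `-I` on the block subdiagonal, and `C_j` for
`1 ≤ j ≤ q-1` with top block row `(A_{j+(k-1)q}, …, A_{j+q}, A_j)` and zeros elsewhere),
we have `det P(z) = det (Σ_{j=0}^{q} C_j z^j)` for all `z ∈ ℂ`. -/
theorem det_ellification (m n k q : ℕ) (hk : 0 < k) (hq : 0 < q) (hn : n = k * q)
    (A : ℕ → Matrix (Fin m) (Fin m) ℂ)
    (C : ℕ → Matrix (Fin k × Fin m) (Fin k × Fin m) ℂ)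
    (hCq : C q = Matrix.of (fun (p r : Fin k × Fin m) =>
      if p.1 = r.1 then
        (if (p.1 : ℕ) = 0 then A n p.2 r.2 else (1 : Matrix (Fin m) (Fin m) ℂ) p.2 r.2)
      else 0))
    (hC0 : C 0 = Matrix.of (fun (p r : Fin k × Fin m) =>
      if (p.1 : ℕ) = 0 then A ((k - 1 - (r.1 : ℕ)) * q) p.2 r.2
      else if (r.1 : ℕ) + 1 = (p.1 : ℕ) then (-(1 : Matrix (Fin m) (Fin m) ℂ)) p.2 r.2
      else 0))
    (hCj : ∀ j, 1 ≤ j → j ≤ q - 1 → C j = Matrix.of (fun (p r : Fin k × Fin m) =>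
      if (p.1 : ℕ) = 0 then A (j + (k - 1 - (r.1 : ℕ)) * q) p.2 r.2 else 0))
    (z : ℂ) :
    (∑ j ∈ Finset.range (n + 1), z ^ j • A j).det
      = (∑ j ∈ Finset.range (q + 1), z ^ j • C j).det := by
  subst hn
  obtain ⟨Q, rfl⟩ : ∃ Q, q = Q + 1 := ⟨q - 1, by omega⟩
  obtain ⟨K, rfl⟩ : ∃ K, k = K + 1 := ⟨k - 1, by omega⟩
  -- Step 1: the companion-type matrix equals the flattened block matrix `MM`.
  have hC : (∑ j ∈ Finset.range ((Q + 1) + 1), z ^ j • C j) = flatEll m (K + 1) (LLif.MM m (K + 1) (Q + 1) ((K + 1) * (Q + 1)) A z) := by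
    rw [Finset.sum_range_succ, Finset.sum_range_succ']
    have hmid : ∀ i ∈ Finset.range Q, z ^ (i + 1) • C (i + 1)
        = z ^ (i + 1) • Matrix.of (fun (p r : Fin (K + 1) × Fin m) =>
            if (p.1 : ℕ) = 0 then A ((i + 1) + ((K + 1) - 1 - (r.1 : ℕ)) * (Q + 1)) p.2 r.2 else 0) := by
      intro i hi
      rw [hCj (i + 1) (by omega) (by simp only [Finset.mem_range] at hi; omega)]
    rw [Finset.sum_congr rfl hmid, hC0, hCq]
    ext ⟨p, ii⟩ ⟨c, jj⟩
    simp only [Matrix.add_apply, Matrix.smul_apply, Matrix.of_apply, Matrix.sum_apply,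
      smul_eq_mul, flatEll, LLif.MM, LLif.T,
      apply_ite (fun (M : Matrix (Fin m) (Fin m) ℂ) => M ii jj), Matrix.zero_apply]
    by_cases hp : (p : ℕ) = 0
    · simp only [if_pos hp]
      have hpc : (p = c) ↔ ((c : ℕ) = 0) := by
        constructor
        · intro h; rw [← h]; exact hp
        · intro h; exact Fin.ext (by omega)
      rw [Finset.sum_range_succ' (fun j => z ^ j * A (j + (K + 1 - 1 - (c : ℕ)) * (Q + 1)) ii jj) Q]
      by_cases hc : p = c
      · rw [if_pos hc, if_pos (hpc.mp hc)]
        simp only [Nat.zero_add]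
      · rw [if_neg hc, if_neg (fun h => hc (hpc.mpr h))]
        simp only [Nat.zero_add]
        ring
    · simp only [if_neg hp]
      simp only [mul_zero, Finset.sum_const_zero]
      by_cases hc1 : (c : ℕ) + 1 = (p : ℕ)
      · have hcp : ¬ p = c := fun h => by rw [h] at hc1; omega
        rw [if_pos hc1, if_pos hc1, if_neg hcp]
        ring
      · rw [if_neg hc1, if_neg hc1]
        by_cases hc2 : p = c
        · rw [if_pos hc2, if_pos hc2.symm]
          ring
        · rw [if_neg hc2, if_neg (fun (h : c = p) => hc2 h.symm)]
          ring
  rw [hC]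
  -- Step 2: triangular transformations.
  have e1 : flatEll m (K + 1) (LLif.UU m (K + 1) (Q + 1) ((K + 1) * (Q + 1)) A z) * flatEll m (K + 1) (LLif.MM m (K + 1) (Q + 1) ((K + 1) * (Q + 1)) A z)
        * flatEll m (K + 1) (LLif.VV m (K + 1) (Q + 1) z) = flatEll m (K + 1) (LLif.WW m (K + 1) (Q + 1) ((K + 1) * (Q + 1)) A z) := by
    rw [← flatEll_mul, ← flatEll_mul, Matrix.mul_assoc, LLif.MV_eq, LLif.UN_eq]
  have e2 : (flatEll m (K + 1) (LLif.MM m (K + 1) (Q + 1) ((K + 1) * (Q + 1)) A z)).det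
      = (flatEll m (K + 1) (LLif.WW m (K + 1) (Q + 1) ((K + 1) * (Q + 1)) A z)).det := by
    calc (flatEll m (K + 1) (LLif.MM m (K + 1) (Q + 1) ((K + 1) * (Q + 1)) A z)).det
        = (flatEll m (K + 1) (LLif.UU m (K + 1) (Q + 1) ((K + 1) * (Q + 1)) A z)).det * (flatEll m (K + 1) (LLif.MM m (K + 1) (Q + 1) ((K + 1) * (Q + 1)) A z)).det
            * (flatEll m (K + 1) (LLif.VV m (K + 1) (Q + 1) z)).det := by
          rw [LLif.det_flat_U m (K + 1) (Q + 1) ((K + 1) * (Q + 1)) A z hk, LLif.det_flat_V m (K + 1) (Q + 1) z hk, one_mul, mul_one]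
      _ = (flatEll m (K + 1) (LLif.UU m (K + 1) (Q + 1) ((K + 1) * (Q + 1)) A z) * flatEll m (K + 1) (LLif.MM m (K + 1) (Q + 1) ((K + 1) * (Q + 1)) A z)
            * flatEll m (K + 1) (LLif.VV m (K + 1) (Q + 1) z)).det := by
          rw [Matrix.det_mul, Matrix.det_mul]
      _ = (flatEll m (K + 1) (LLif.WW m (K + 1) (Q + 1) ((K + 1) * (Q + 1)) A z)).det := by rw [e1]
  rw [e2, LLif.det_flat_W m (Q + 1) ((K + 1) * (Q + 1)) A z K]
  have e3 := LLif.S_eq m (K + 1) (Q + 1) A z hk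
  rw [Nat.add_sub_cancel] at e3
  rw [← e3]
end

section
/- Let P(z) = I z^n + A_{n-1} z^{n-1} + ... + A_0 be monic with complex m×m coefficients, let i be minimal with A_{n-i} ≠ 0, and define T^{(L)}(z) = (I z^i − A_{n-i}) P(z). With any submultiplicative matrix norm satisfying ‖I‖ = 1, the Cauchy radius of T^{(L)} is at most the Cauchy radius of P, where the Cauchy radius of a monic matrix polynomial Σ B_j z^d + ... is the unique positive root of t^d − Σ_{j<d} ‖B_j‖ t^j. -/
/-!
Write `P = X^n + M X^(n-i) + R` with `M = A_{n-i}` and `deg R < n - i`, so that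
`T = (X^i - M) P = X^(n+i) + X^i R - M (M X^(n-i) + R)` has no terms of degree in `[n, n+i)`.
Bounding the lower coefficients with `ν` at `r = r_P` gives
`∑_{j<n+i} ν(B_j) r^j ≤ r^i R̃(r) + ν(M) (ν(M) r^(n-i) + R̃(r)) = r^i r^n`,
where `R̃(r) = ∑_j ν(R_j) r^j` and `r^n = ν(M) r^(n-i) + R̃(r)` is the defining equation of `r_P`.
So the Cauchy polynomial of `T` is nonnegative at `r_P`, and since `∑_j c_j t^(j-d)` decreases in
`t > 0`, it stays positive beyond `r_P`, whence `r_T ≤ r_P`.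
-/

open Finset

noncomputable def cauchyPoly (d : ℕ) (c : ℕ → ℝ) (t : ℝ) : ℝ :=
  t ^ d - ∑ j ∈ range d, c j * t ^ j

theorem cauchyPoly_congr {d : ℕ} {c c' : ℕ → ℝ} (h : ∀ j < d, c j = c' j) (t : ℝ) :
    cauchyPoly d c t = cauchyPoly d c' t := by
  unfold cauchyPoly
  rw [sum_congr rfl fun j hj => by rw [h j (mem_range.mp hj)]]

theorem pow_mul_pow_le_pow_mul_pow {α : Type*} [CommSemiring α] [PartialOrder α]
    [IsOrderedRing α] {r s : α} (hr : 0 ≤ r) (hrs : r ≤ s) {j k : ℕ} (hjk : j ≤ k) :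
    s ^ j * r ^ k ≤ r ^ j * s ^ k := by
  obtain ⟨l, rfl⟩ := Nat.exists_eq_add_of_le hjk
  rw [pow_add, pow_add, ← mul_assoc, ← mul_assoc, mul_comm (s ^ j)]
  exact mul_le_mul_of_nonneg_left (pow_le_pow_left₀ hr hrs l)
    (mul_nonneg (pow_nonneg hr j) (pow_nonneg (hr.trans hrs) j))

theorem le_of_cauchyPoly_eq_zero {d : ℕ} {c : ℕ → ℝ} (hc : ∀ j, 0 ≤ c j) {r s : ℝ}
    (hr : 0 < r) (hs : 0 < s) (hr_nonneg : 0 ≤ cauchyPoly d c r) (hs_root : cauchyPoly d c s = 0) :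
    s ≤ r := by
  unfold cauchyPoly at hr_nonneg hs_root
  obtain _ | k := d
  · simp at hs_root
  by_contra! hrs
  have h_scaled : s * (s * r) ^ k ≤ r * (s * r) ^ k :=
    calc s * (s * r) ^ k = ∑ j ∈ range (k + 1), c j * (s ^ j * r ^ k) := by
          rw [mul_pow, ← mul_assoc, ← pow_succ', sub_eq_zero.mp hs_root, sum_mul]
          simp only [mul_assoc]
      _ ≤ ∑ j ∈ range (k + 1), c j * (r ^ j * s ^ k) := by
          refine sum_le_sum fun j hj => mul_le_mul_of_nonneg_left ?_ (hc j)
          exact pow_mul_pow_le_pow_mul_pow hr.le hrs.le (Nat.lt_succ_iff.mp (mem_range.mp hj))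
      _ ≤ r ^ (k + 1) * s ^ k := by
          simp only [← mul_assoc, ← sum_mul]
          exact mul_le_mul_of_nonneg_right (sub_nonneg.mp hr_nonneg) (pow_nonneg hs.le k)
      _ = r * (s * r) ^ k := by ring
  exact hrs.not_ge (le_of_mul_le_mul_right h_scaled (by positivity))

theorem eq_of_forall_sum_pow_mul_eq {K : Type*} [CommRing K] [IsDomain K] [Infinite K] {N : ℕ}
    {c d : ℕ → K} (h : ∀ z : K, ∑ j ∈ range N, z ^ j * c j = ∑ j ∈ range N, z ^ j * d j)
    {j : ℕ} (hj : j < N) : c j = d j := by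
  have hpoly : ∑ k ∈ range N, Polynomial.monomial k (c k)
      = ∑ k ∈ range N, Polynomial.monomial k (d k) :=
    Polynomial.funext fun z => by
      simpa only [Polynomial.eval_finsetSum, Polynomial.eval_monomial, mul_comm] using h z
  simpa [Polynomial.finsetSum_coeff, Polynomial.coeff_monomial, hj] using
    congrArg (Polynomial.coeff · j) hpoly

theorem Matrix.eq_of_forall_sum_pow_smul_eq {ι κ K : Type*} [CommRing K] [IsDomain K] [Infinite K]
    {N : ℕ} {C D : ℕ → Matrix ι κ K}
    (h : ∀ z : K, ∑ j ∈ range N, z ^ j • C j = ∑ j ∈ range N, z ^ j • D j)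
    {j : ℕ} (hj : j < N) : C j = D j := by
  ext k l
  exact eq_of_forall_sum_pow_mul_eq (K := K) (fun z => by
    simpa only [Matrix.sum_apply, Matrix.smul_apply, smul_eq_mul] using
      congrFun (congrFun (h z) k) l) hj

section XPowSubMul

variable {R : Type*} [Ring R]

/-- The `j`-th coefficient of `(X ^ i - M) * ∑_{k ≤ n} A k X ^ k`. -/
def xPowSubMulCoeff (i : ℕ) (M : R) (n : ℕ) (A : ℕ → R) (j : ℕ) : R :=
  (if i ≤ j then A (j - i) else 0) - if j ≤ n then M * A j else 0

theorem sum_pow_smul_xPowSubMulCoeff {K : Type*} [CommSemiring K] [Algebra K R] (z : K) (i : ℕ)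
    (M : R) (n : ℕ) (A : ℕ → R) :
    ∑ j ∈ range (n + i + 1), z ^ j • xPowSubMulCoeff i M n A j
      = (z ^ i • 1 - M) * ∑ j ∈ range (n + 1), z ^ j • A j := by
  simp only [xPowSubMulCoeff, smul_sub, sum_sub_distrib, sub_mul, smul_mul_assoc, one_mul,
    mul_sum, mul_smul_comm]
  congr 1
  · rw [show n + i + 1 = i + (n + 1) by ring, sum_range_add,
      sum_eq_zero fun j hj => by rw [if_neg (not_le.mpr (mem_range.mp hj)), smul_zero],
      zero_add]
    simp [pow_add, mul_smul, smul_comm (z ^ i)]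
  · rw [show n + i + 1 = n + 1 + i by ring, sum_range_add,
      sum_eq_zero (s := range i) fun j _ => by rw [if_neg (by omega), smul_zero], add_zero]
    exact sum_congr rfl fun j hj => by rw [if_pos (Nat.lt_succ_iff.mp (mem_range.mp hj))]

theorem xPowSubMulCoeff_eq_zero {n i : ℕ} (hin : i ≤ n) {A : ℕ → R} (hmonic : A n = 1)
    (hgap : ∀ j, 0 < j → j < i → A (n - j) = 0) {j : ℕ} (hnj : n ≤ j) (hj : j < n + i) :
    xPowSubMulCoeff i (A (n - i)) n A j = 0 := by
  unfold xPowSubMulCoeff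
  rcases hnj.eq_or_lt with rfl | hnj
  · rw [if_pos (by omega), if_pos le_rfl, hmonic, mul_one, sub_self]
  · rw [if_pos (by omega), if_neg (by omega), sub_zero, ← hgap (n + i - j) (by omega) (by omega)]
    congr 1
    omega

theorem xPowSubMulCoeff_le (ν : RingSeminorm R) (i : ℕ) (M : R) (n : ℕ) (A : ℕ → R) (j : ℕ) :
    ν (xPowSubMulCoeff i M n A j) ≤ (if i ≤ j then ν (A (j - i)) else 0) + ν M * ν (A j) := by
  refine (map_sub_le_add ν _ _).trans (add_le_add ?_ ?_)
  · split_ifs <;> simp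
  · split_ifs
    · exact map_mul_le_mul ν _ _
    · simpa using mul_nonneg (apply_nonneg ν M) (apply_nonneg ν (A j))

theorem cauchyPoly_xPowSubMulCoeff_nonneg (ν : RingSeminorm R) {n i : ℕ} (hi : 0 < i) (hin : i ≤ n)
    {A : ℕ → R} (hmonic : A n = 1) (hgap : ∀ j, 0 < j → j < i → A (n - j) = 0) {r : ℝ}
    (hr : 0 ≤ r) (hroot : cauchyPoly n (fun j => ν (A j)) r = 0) :
    0 ≤ cauchyPoly (n + i) (fun j => ν (xPowSubMulCoeff i (A (n - i)) n A j)) r := by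
  have hcoeff : ∀ j, n ≤ j → j < n + i → xPowSubMulCoeff i (A (n - i)) n A j = 0 :=
    fun _ => xPowSubMulCoeff_eq_zero hin hmonic hgap
  obtain ⟨l, rfl⟩ := Nat.exists_eq_add_of_le' hin
  rw [Nat.add_sub_cancel] at hcoeff ⊢
  have hA : ∀ j, l < j → j < l + i → A j = 0 := fun j hlj hj => by
    simpa [show l + i - (l + i - j) = j by omega] using hgap (l + i - j) (by omega) (by omega)
  set a := ν (A l)
  set S := ∑ j ∈ range l, ν (A j) * r ^ j
  have hP : r ^ (l + i) = S + a * r ^ l :=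
    calc r ^ (l + i) = ∑ j ∈ range (l + i), ν (A j) * r ^ j := sub_eq_zero.mp hroot
      _ = S + ∑ x ∈ range i, ν (A (l + x)) * r ^ (l + x) := sum_range_add _ l i
      _ = S + a * r ^ l := by
        rw [sum_eq_single_of_mem 0 (mem_range.mpr hi) fun x hx hx0 => by
          rw [hA (l + x) (by omega) (by simp at hx; omega), map_zero, zero_mul], add_zero]
  have htop : ∑ j ∈ range (l + i + i), ν (xPowSubMulCoeff i (A l) (l + i) A j) * r ^ j
      = ∑ j ∈ range (l + i), ν (xPowSubMulCoeff i (A l) (l + i) A j) * r ^ j := by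
    rw [sum_range_add, sum_eq_zero (s := range i) fun x hx => by
      rw [hcoeff _ (by omega) (by simp at hx; omega), map_zero, zero_mul], add_zero]
  have hshift : ∑ j ∈ range (l + i), (if i ≤ j then ν (A (j - i)) else 0) * r ^ j = r ^ i * S := by
    rw [add_comm l i, sum_range_add, sum_eq_zero fun j hj => by
      rw [if_neg (not_le.mpr (mem_range.mp hj)), zero_mul], zero_add, mul_sum]
    simp [pow_add, mul_left_comm]
  unfold cauchyPoly
  rw [sub_nonneg, htop]
  calc ∑ j ∈ range (l + i), ν (xPowSubMulCoeff i (A l) (l + i) A j) * r ^ j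
      ≤ ∑ j ∈ range (l + i), ((if i ≤ j then ν (A (j - i)) else 0) + a * ν (A j)) * r ^ j :=
        sum_le_sum fun j _ => mul_le_mul_of_nonneg_right (xPowSubMulCoeff_le ν _ _ _ _ _)
          (pow_nonneg hr j)
    _ = r ^ i * S + a * r ^ (l + i) := by
        simp only [add_mul, sum_add_distrib, hshift, mul_assoc, ← mul_sum, ← sub_eq_zero.mp hroot]
    _ = r ^ i * (S + a * r ^ l) := by ring
    _ = r ^ (l + i + i) := by rw [← hP]; ring

end XPowSubMul

theorem cauchy_radius_improvement_general (m n i : ℕ) (hi : 0 < i) (hin : i ≤ n)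
    (A : ℕ → Matrix (Fin m) (Fin m) ℂ)
    (hmonic : A n = 1)
    (hmin : ∀ j, 0 < j → j < i → A (n - j) = 0)
    (ν : Matrix (Fin m) (Fin m) ℂ → ℝ)
    (hsmul : ∀ (c : ℂ) X, ν (c • X) = ‖c‖ * ν X)
    (htri : ∀ X Y, ν (X + Y) ≤ ν X + ν Y)
    (hmul : ∀ X Y, ν (X * Y) ≤ ν X * ν Y)
    (B : ℕ → Matrix (Fin m) (Fin m) ℂ)
    (hB : ∀ z : ℂ, ∑ j ∈ Finset.range (n + i + 1), z ^ j • B j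
      = (z ^ i • (1 : Matrix (Fin m) (Fin m) ℂ) - A (n - i)) *
          ∑ j ∈ Finset.range (n + 1), z ^ j • A j)
    (rP rT : ℝ) (hrP : 0 < rP) (hrT : 0 < rT)
    (hrProot : rP ^ n - ∑ j ∈ Finset.range n, ν (A j) * rP ^ j = 0)
    (hrTroot : rT ^ (n + i) - ∑ j ∈ Finset.range (n + i), ν (B j) * rT ^ j = 0) :
    rT ≤ rP := by
  let νR : RingSeminorm (Matrix (Fin m) (Fin m) ℂ) :=
    { (Seminorm.of ν htri hsmul).toAddGroupSeminorm with mul_le' := hmul }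
  have hBcoeff : ∀ j < n + i + 1, B j = xPowSubMulCoeff i (A (n - i)) n A j := fun j =>
    Matrix.eq_of_forall_sum_pow_smul_eq fun z =>
      (hB z).trans (sum_pow_smul_xPowSubMulCoeff z i _ n A).symm
  have hT_nonneg : 0 ≤ cauchyPoly (n + i) (fun j => νR (B j)) rP := by
    rw [cauchyPoly_congr fun j hj => congrArg νR (hBcoeff j (by omega))]
    exact cauchyPoly_xPowSubMulCoeff_nonneg νR hi hin hmonic hmin hrP.le hrProot
  exact le_of_cauchyPoly_eq_zero (fun j => apply_nonneg νR (B j)) hrP hrT hT_nonneg hrTroot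

/-- Melman/Rahman–Schmeisser improvement for monic matrix polynomials: with
`P(z) = I z^n + A_{n-1} z^{n-1} + ⋯ + A_0`, `i` minimal with `A_{n-i} ≠ 0`, and
`T⁽ᴸ⁾(z) = (I z^i − A_{n-i}) P(z) = Σ_{j=0}^{n+i} B_j z^j`, for any submultiplicative
matrix norm with `ν I = 1`, the Cauchy radius of `T⁽ᴸ⁾` (the unique positive root
`r_T` of `t^{n+i} − Σ_{j<n+i} ν(B_j) t^j`) is at most the Cauchy radius of `P`
(the unique positive root `r_P` of `t^n − Σ_{j<n} ν(A_j) t^j`). -/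
theorem cauchy_radius_improvement (m n i : ℕ) (hn : 0 < n) (hi : 0 < i) (hin : i ≤ n)
    (A : ℕ → Matrix (Fin m) (Fin m) ℂ)
    (hmonic : A n = 1)
    (hAne : A (n - i) ≠ 0)
    (hmin : ∀ j, 0 < j → j < i → A (n - j) = 0)
    (ν : Matrix (Fin m) (Fin m) ℂ → ℝ)
    (hzero : ∀ X, ν X = 0 ↔ X = 0)
    (hsmul : ∀ (c : ℂ) X, ν (c • X) = ‖c‖ * ν X)
    (htri : ∀ X Y, ν (X + Y) ≤ ν X + ν Y)
    (hmul : ∀ X Y, ν (X * Y) ≤ ν X * ν Y)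
    (hone : ν 1 = 1)
    (B : ℕ → Matrix (Fin m) (Fin m) ℂ)
    (hB : ∀ z : ℂ, ∑ j ∈ Finset.range (n + i + 1), z ^ j • B j
      = (z ^ i • (1 : Matrix (Fin m) (Fin m) ℂ) - A (n - i)) *
          ∑ j ∈ Finset.range (n + 1), z ^ j • A j)
    (rP rT : ℝ) (hrP : 0 < rP) (hrT : 0 < rT)
    (hrProot : rP ^ n - ∑ j ∈ Finset.range n, ν (A j) * rP ^ j = 0)
    (hrTroot : rT ^ (n + i) - ∑ j ∈ Finset.range (n + i), ν (B j) * rT ^ j = 0) :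
    rT ≤ rP :=
  cauchy_radius_improvement_general m n i hi hin A hmonic hmin ν hsmul htri hmul B hB rP rT hrP hrT
    hrProot hrTroot
end

section
/- For the ℓ-ification with k = 2 (q = n/2, n even): the eigenvalues of P(z) = Σ_{j=0}^n A_j z^j coincide with those of the 2m×2m-coefficient matrix polynomial Q(z) = C_q z^q + Σ_{j=0}^{q-1} C_j z^j, where C_q = diag(A_n, I), C_j = [[A_{j+q}, A_j],[0,0]] for 1 ≤ j ≤ q−1, and C_0 = [[A_q, A_0],[−I, 0]]; i.e., det P(z) = det Q(z) for all z ∈ ℂ. -/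
open Matrix Finset

variable {m : ℕ}

private lemma detJ (m : ℕ) :
    (fromBlocks (0 : Matrix (Fin m) (Fin m) ℂ) (1 : Matrix (Fin m) (Fin m) ℂ) (-1) 0).det = 1 := by
  have h : (fromBlocks (0 : Matrix (Fin m) (Fin m) ℂ) (1 : Matrix (Fin m) (Fin m) ℂ) (-1) 0)
      = (fromBlocks 1 1 0 1 : Matrix (Fin m ⊕ Fin m) (Fin m ⊕ Fin m) ℂ)
        * ((fromBlocks 1 0 (-1) 1 : Matrix (Fin m ⊕ Fin m) (Fin m ⊕ Fin m) ℂ)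
          * (fromBlocks 1 1 0 1 : Matrix (Fin m ⊕ Fin m) (Fin m ⊕ Fin m) ℂ)) := by
    simp [Matrix.fromBlocks_multiply]
  rw [h, det_mul, det_mul, det_fromBlocks_zero₂₁, det_fromBlocks_zero₁₂]
  simp

private lemma det_anti (X B : Matrix (Fin m) (Fin m) ℂ) :
    (fromBlocks X B (-1) 0).det = B.det := by
  have h : fromBlocks X B (-1) (0 : Matrix (Fin m) (Fin m) ℂ)
      = fromBlocks (0 : Matrix (Fin m) (Fin m) ℂ) (1 : Matrix (Fin m) (Fin m) ℂ) (-1) 0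
        * (fromBlocks 1 0 X B : Matrix (Fin m ⊕ Fin m) (Fin m ⊕ Fin m) ℂ) := by
    simp [Matrix.fromBlocks_multiply]
  rw [h, det_mul, detJ, det_fromBlocks_zero₁₂, det_one, one_mul, one_mul]

private lemma det_key (S T : Matrix (Fin m) (Fin m) ℂ) (w : ℂ) :
    (fromBlocks S T (-1) (w • 1)).det = (w • S + T).det := by
  have h : fromBlocks S T (-1) (w • (1 : Matrix (Fin m) (Fin m) ℂ))
        * (fromBlocks 1 (w • (1 : Matrix (Fin m) (Fin m) ℂ)) 0 1
            : Matrix (Fin m ⊕ Fin m) (Fin m ⊕ Fin m) ℂ)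
        = fromBlocks S (w • S + T) (-1) 0 := by
    simp [Matrix.fromBlocks_multiply, Matrix.mul_smul, add_comm]
  have h2 : (fromBlocks S T (-1) (w • (1 : Matrix (Fin m) (Fin m) ℂ))).det
      * ((fromBlocks 1 (w • (1:Matrix (Fin m) (Fin m) ℂ)) 0 1
          : Matrix (Fin m ⊕ Fin m) (Fin m ⊕ Fin m) ℂ)).det
      = (fromBlocks S (w • S + T) (-1) (0:Matrix (Fin m) (Fin m) ℂ)).det := by
    rw [← det_mul, h]
  rw [det_fromBlocks_zero₂₁, det_one, one_mul, mul_one] at h2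
  rw [h2, det_anti]

/-- ℓ-ification with `k = 2` (`n = 2q` even): the eigenvalues of `P(z) = Σ_{j=0}^{n} A_j z^j`
coincide with those of `Q(z) = C_q z^q + Σ_{j=0}^{q-1} C_j z^j`, where
`C_q = diag(A_n, I)`, `C_j = [[A_{j+q}, A_j], [0, 0]]` for `1 ≤ j ≤ q−1`, and
`C_0 = [[A_q, A_0], [−I, 0]]`; i.e. `det P(z) = det Q(z)` for all `z ∈ ℂ`. -/
theorem det_ellification_k2 (m n q : ℕ) (hq : 0 < q) (hn : n = 2 * q)
    (A : ℕ → Matrix (Fin m) (Fin m) ℂ) :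
    ∀ z : ℂ, (∑ j ∈ Finset.range (n + 1), z ^ j • A j).det
      = (z ^ q • Matrix.fromBlocks (A n) 0 0 (1 : Matrix (Fin m) (Fin m) ℂ)
          + (∑ j ∈ Finset.Ico 1 q, z ^ j • Matrix.fromBlocks (A (j + q)) (A j) 0 0)
          + Matrix.fromBlocks (A q) (A 0) (-(1 : Matrix (Fin m) (Fin m) ℂ)) 0).det := by
  intro z
  set S : Matrix (Fin m) (Fin m) ℂ :=
    z ^ q • A n + (∑ j ∈ Finset.Ico 1 q, z ^ j • A (j + q)) + A q with hS
  set T : Matrix (Fin m) (Fin m) ℂ :=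
    (∑ j ∈ Finset.Ico 1 q, z ^ j • A j) + A 0 with hT
  have hQ : z ^ q • Matrix.fromBlocks (A n) 0 0 (1 : Matrix (Fin m) (Fin m) ℂ)
          + (∑ j ∈ Finset.Ico 1 q, z ^ j • Matrix.fromBlocks (A (j + q)) (A j) 0 0)
          + Matrix.fromBlocks (A q) (A 0) (-(1 : Matrix (Fin m) (Fin m) ℂ)) 0
      = fromBlocks S T (-1) (z ^ q • 1) := by
    ext (i | i) (j | j) <;>
      simp [hS, hT, Matrix.fromBlocks, Matrix.sum_apply, Finset.sum_apply]
  rw [hQ, det_key]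
  congr 1
  -- z ^ q • S + T = ∑ j ∈ range (n+1), z ^ j • A j
  subst hn
  have f : ℕ → Matrix (Fin m) (Fin m) ℂ := fun j => z ^ j • A j
  have e1 : ∑ j ∈ Finset.range (2 * q + 1), z ^ j • A j
      = (∑ j ∈ Finset.Ico 0 q, z ^ j • A j) + ∑ j ∈ Finset.Ico q (2 * q + 1), z ^ j • A j := by
    rw [Finset.range_eq_Ico, ← Finset.sum_Ico_consecutive _ (Nat.zero_le q) (by omega)]
  have e2 : ∑ j ∈ Finset.Ico 0 q, z ^ j • A j
      = z ^ 0 • A 0 + ∑ j ∈ Finset.Ico 1 q, z ^ j • A j :=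
    Finset.sum_eq_sum_Ico_succ_bot hq _
  have e3 : ∑ j ∈ Finset.Ico q (2 * q + 1), z ^ j • A j
      = z ^ q • A q + ∑ j ∈ Finset.Ico (q + 1) (2 * q + 1), z ^ j • A j :=
    Finset.sum_eq_sum_Ico_succ_bot (by omega) _
  have e4 : ∑ j ∈ Finset.Ico (q + 1) (2 * q + 1), z ^ j • A j
      = (∑ j ∈ Finset.Ico (q + 1) (2 * q), z ^ j • A j) + z ^ (2 * q) • A (2 * q) := by
    rw [Finset.sum_Ico_succ_top (by omega)]
  have e5 : ∑ j ∈ Finset.Ico (q + 1) (2 * q), z ^ j • A j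
      = ∑ j ∈ Finset.Ico 1 q, z ^ (j + q) • A (j + q) := by
    rw [Finset.sum_Ico_eq_sum_range, Finset.sum_Ico_eq_sum_range]
    have : 2 * q - (q + 1) = q - 1 := by omega
    rw [this]
    exact Finset.sum_congr rfl fun i _ => by rw [show q + 1 + i = 1 + i + q by ring]
  rw [hS, hT, e1, e2, e3, e4, e5]
  rw [smul_add, smul_add, Finset.smul_sum]
  simp only [smul_smul, ← pow_add, pow_zero, one_smul]
  have : ∀ j, z ^ (q + j) • A (j + q) = z ^ (j + q) • A (j + q) := fun j => by ring_nf
  simp only [this]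
  rw [show q + q = 2 * q from by ring]
  abel
end
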